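/- Consider the semi-discrete elasto-acoustic system in algebraic form: real matrices M₁, M₂, M₃, A_e of size n×n and M_a, A_a of size m×m, and a coupling matrix C_e of size n×m, with M₁, M₃, A_e, M_a, A_a symmetric; twice differentiable functions U : [0,T] → ℝⁿ and Φ : [0,T] → ℝᵐ satisfy M₁ Ü(t) + M₂ U̇(t) + (M₃ + A_e) U(t) + C_e Φ̇(t) = F_e(t) and M_a Φ̈(t) + A_a Φ(t) − C_eᵀ U̇(t) = F_a(t) for all t ∈ [0,T], where F_e : [0,T] → ℝⁿ and F_a : [0,T] → ℝᵐ are continuous. Assume in addition that M₁ and M_a are positive definite and M₂, M₃, A_e, A_a are positive semidefinite. Define the energy E(t) = U̇(t)ᵀM₁U̇(t) + U(t)ᵀM₃U(t) + U(t)ᵀA_eU(t) + Φ̇(t)ᵀM_aΦ̇(t) + Φ(t)ᵀA_aΦ(t). Then for every t ∈ [0,T], √E(t) ≤ √E(0) + ∫₀ᵗ ( √(F_e(τ)ᵀ M₁⁻¹ F_e(τ)) + √(F_a(τ)ᵀ M_a⁻¹ F_a(τ)) ) dτ. -/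

import Mathlib

/-!
Differentiating the energy along the system and using the symmetry of the stiffness and mass
matrices gives `E' = 2 U̇ᵀF_e + 2 Φ̇ᵀF_a - 2 U̇ᵀM₂U̇`, the interface terms cancelling because
`C_a = -C_eᵀ`. Cauchy–Schwarz in the `M₁` and `M_a` inner products bounds `U̇ᵀF_e` by
`√E · √(F_eᵀM₁⁻¹F_e)`, and likewise for the acoustic load, so `E' ≤ 2 √E g` with `g` the
integrand of the claim; this differential inequality integrates to `√E(t) ≤ √E(0) + ∫₀ᵗ g`.
-/

open Set Matrix

section Deriv

variable {ι κ 𝕜 : Type*} [Fintype ι] [Fintype κ] [NontriviallyNormedField 𝕜]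

theorem Matrix.IsSymm.dotProduct_mulVec_comm {R : Type*} [CommSemiring R] {A : Matrix ι ι R}
    (hA : A.IsSymm) (x y : ι → R) : x ⬝ᵥ (A *ᵥ y) = y ⬝ᵥ (A *ᵥ x) := by
  simpa only [hA.eq] using dotProduct_transpose_mulVec A x y

theorem HasDerivAt.dotProduct_mulVec (A : Matrix ι κ 𝕜) {x : 𝕜 → ι → 𝕜} {y : 𝕜 → κ → 𝕜}
    {x' : ι → 𝕜} {y' : κ → 𝕜} {t : 𝕜} (hx : HasDerivAt x x' t) (hy : HasDerivAt y y' t) :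
    HasDerivAt (fun s ↦ x s ⬝ᵥ (A *ᵥ y s)) (x' ⬝ᵥ (A *ᵥ y t) + x t ⬝ᵥ (A *ᵥ y')) t := by
  simp only [dotProduct, mulVec, ← Finset.sum_add_distrib]
  exact HasDerivAt.fun_sum fun i _ ↦ (hasDerivAt_pi.1 hx i).mul
    (HasDerivAt.fun_sum fun j _ ↦ (hasDerivAt_pi.1 hy j).const_mul (A i j))

theorem HasDerivAt.dotProduct_mulVec_self {A : Matrix ι ι 𝕜} (hA : A.IsSymm)
    {x : 𝕜 → ι → 𝕜} {x' : ι → 𝕜} {t : 𝕜} (hx : HasDerivAt x x' t) :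
    HasDerivAt (fun s ↦ x s ⬝ᵥ (A *ᵥ x s)) (2 * (x' ⬝ᵥ (A *ᵥ x t))) t := by
  convert hx.dotProduct_mulVec A hx using 1
  rw [hA.dotProduct_mulVec_comm (x t)]
  ring

end Deriv

namespace Matrix

variable {ι : Type*} [Fintype ι]

theorem PosSemidef.dotProduct_mulVec_self_nonneg {A : Matrix ι ι ℝ} (hA : A.PosSemidef)
    (x : ι → ℝ) : 0 ≤ x ⬝ᵥ (A *ᵥ x) := by
  simpa using hA.dotProduct_mulVec_nonneg x

theorem PosSemidef.dotProduct_mulVec_le_sqrt_mul_sqrt {A : Matrix ι ι ℝ} (hA : A.PosSemidef)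
    (x y : ι → ℝ) : x ⬝ᵥ (A *ᵥ y) ≤ √(x ⬝ᵥ (A *ᵥ x)) * √(y ⬝ᵥ (A *ᵥ y)) := by
  have hsymm : A.IsSymm := isHermitian_iff_isSymm.1 hA.isHermitian
  have hq := hA.dotProduct_mulVec_self_nonneg
  have hdiscr : discrim (y ⬝ᵥ (A *ᵥ y)) (2 * (x ⬝ᵥ (A *ᵥ y))) (x ⬝ᵥ (A *ᵥ x)) ≤ 0 := by
    refine discrim_le_zero fun s ↦ (hq (x + s • y)).trans_eq ?_
    simp only [mulVec_add, mulVec_smul, dotProduct_add, add_dotProduct, dotProduct_smul,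
      smul_dotProduct, smul_eq_mul, hsymm.dotProduct_mulVec_comm y x]
    ring
  rw [← Real.sqrt_mul (hq x)]
  refine Real.le_sqrt_of_sq_le ?_
  rw [discrim] at hdiscr
  linarith

theorem PosDef.dotProduct_le_sqrt_mul_sqrt_inv [DecidableEq ι] {A : Matrix ι ι ℝ}
    (hA : A.PosDef) (x f : ι → ℝ) :
    x ⬝ᵥ f ≤ √(x ⬝ᵥ (A *ᵥ x)) * √(f ⬝ᵥ (A⁻¹ *ᵥ f)) := by
  have hf : A *ᵥ (A⁻¹ *ᵥ f) = f := by
    rw [mulVec_mulVec, mul_nonsing_inv _ ((isUnit_iff_isUnit_det A).1 hA.isUnit), one_mulVec]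
  simpa only [hf, dotProduct_comm _ f] using
    hA.posSemidef.dotProduct_mulVec_le_sqrt_mul_sqrt x (A⁻¹ *ᵥ f)

theorem PosDef.dotProduct_le_sqrt_mul_sqrt_inv_of_le [DecidableEq ι] {A : Matrix ι ι ℝ}
    (hA : A.PosDef) {x : ι → ℝ} {e : ℝ} (hx : x ⬝ᵥ (A *ᵥ x) ≤ e) (f : ι → ℝ) :
    x ⬝ᵥ f ≤ √e * √(f ⬝ᵥ (A⁻¹ *ᵥ f)) :=
  (hA.dotProduct_le_sqrt_mul_sqrt_inv x f).trans <| by gcongr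

end Matrix

section SqrtGronwall

variable {E E' g : ℝ → ℝ} {t : ℝ}

/- `√E` need not be differentiable where `E` vanishes, hence the regularisation by `ε`. -/
theorem sqrt_add_le_sqrt_add_integral_of_deriv_le {ε : ℝ} (ht : 0 ≤ t) (hε : 0 < ε)
    (hE : ∀ s ∈ Icc 0 t, HasDerivAt E (E' s) s) (hE0 : ∀ s ∈ Icc 0 t, 0 ≤ E s)
    (hg : Continuous g) (hg0 : ∀ s ∈ Icc 0 t, 0 ≤ g s)
    (hE' : ∀ s ∈ Ico 0 t, E' s ≤ 2 * √(E s) * g s) :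
    √(E t + ε) ≤ √(E 0 + ε) + ∫ s in 0..t, g s := by
  have hpos : ∀ s ∈ Icc 0 t, 0 < E s + ε := fun s hs ↦ by linarith [hE0 s hs]
  have hf : ∀ s ∈ Icc 0 t, HasDerivAt (fun s ↦ √(E s + ε)) (E' s / (2 * √(E s + ε))) s :=
    fun s hs ↦ ((hE s hs).add_const ε).sqrt (hpos s hs).ne'
  have hB : ∀ s, HasDerivAt (fun s ↦ √(E 0 + ε) + ∫ τ in 0..s, g τ) (g s) s := fun s ↦
    (hg.integral_hasStrictDerivAt 0 s).hasDerivAt.const_add _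
  refine image_le_of_deriv_right_le_deriv_boundary (f := fun s ↦ √(E s + ε))
    (fun s hs ↦ (hf s hs).continuousAt.continuousWithinAt)
    (fun s hs ↦ (hf s (Ico_subset_Icc_self hs)).hasDerivWithinAt) (by simp)
    (fun s _ ↦ (hB s).continuousAt.continuousWithinAt) (fun s _ ↦ (hB s).hasDerivWithinAt)
    (fun s hs ↦ ?_) ⟨ht, le_rfl⟩
  have hs' := Ico_subset_Icc_self hs
  rw [div_le_iff₀ (by linarith [Real.sqrt_pos.2 (hpos s hs')])]
  calc E' s ≤ 2 * √(E s) * g s := hE' s hs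
    _ ≤ 2 * √(E s + ε) * g s := by
      gcongr
      · exact hg0 s hs'
      · linarith
    _ = g s * (2 * √(E s + ε)) := by ring

theorem sqrt_le_sqrt_add_integral_of_deriv_le (ht : 0 ≤ t)
    (hE : ∀ s ∈ Icc 0 t, HasDerivAt E (E' s) s) (hE0 : ∀ s ∈ Icc 0 t, 0 ≤ E s)
    (hg : Continuous g) (hg0 : ∀ s ∈ Icc 0 t, 0 ≤ g s)
    (hE' : ∀ s ∈ Ico 0 t, E' s ≤ 2 * √(E s) * g s) :
    √(E t) ≤ √(E 0) + ∫ s in 0..t, g s := by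
  refine le_of_forall_pos_le_add fun δ hδ ↦ ?_
  have hreg := sqrt_add_le_sqrt_add_integral_of_deriv_le ht (pow_pos hδ 2) hE hE0 hg hg0 hE'
  have hEt : √(E t) ≤ √(E t + δ ^ 2) := Real.sqrt_le_sqrt (le_add_of_nonneg_right (sq_nonneg δ))
  have hE0' : √(E 0 + δ ^ 2) ≤ √(E 0) + δ := by
    rw [Real.sqrt_le_left (by positivity)]
    nlinarith [Real.sq_sqrt (hE0 0 ⟨le_rfl, ht⟩), Real.sqrt_nonneg (E 0)]
  linarith

end SqrtGronwall

section ElastoAcoustic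

variable {ι κ : Type*} [Fintype ι] [Fintype κ]
  {M₁ M₂ M₃ Ae : Matrix ι ι ℝ} {Ma Aa : Matrix κ κ ℝ} {Ce : Matrix ι κ ℝ}
  {U U' : ℝ → ι → ℝ} {Φ Φ' : ℝ → κ → ℝ} {u'' fe : ι → ℝ} {φ'' fa : κ → ℝ} {t : ℝ}

theorem hasDerivAt_energy (hM₁ : M₁.IsSymm) (hM₃ : M₃.IsSymm) (hAe : Ae.IsSymm)
    (hMa : Ma.IsSymm) (hAa : Aa.IsSymm)
    (hU : HasDerivAt U (U' t) t) (hU' : HasDerivAt U' u'' t)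
    (hΦ : HasDerivAt Φ (Φ' t) t) (hΦ' : HasDerivAt Φ' φ'' t)
    (hode₁ : M₁ *ᵥ u'' + M₂ *ᵥ U' t + (M₃ + Ae) *ᵥ U t + Ce *ᵥ Φ' t = fe)
    (hode₂ : Ma *ᵥ φ'' + Aa *ᵥ Φ t - Ceᵀ *ᵥ U' t = fa) :
    HasDerivAt (fun s ↦ U' s ⬝ᵥ (M₁ *ᵥ U' s) + U s ⬝ᵥ (M₃ *ᵥ U s) + U s ⬝ᵥ (Ae *ᵥ U s)
        + Φ' s ⬝ᵥ (Ma *ᵥ Φ' s) + Φ s ⬝ᵥ (Aa *ᵥ Φ s))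
      (2 * (U' t ⬝ᵥ fe) + 2 * (Φ' t ⬝ᵥ fa) - 2 * (U' t ⬝ᵥ (M₂ *ᵥ U' t))) t := by
  refine ((((hU'.dotProduct_mulVec_self hM₁).add (hU.dotProduct_mulVec_self hM₃)).add
    (hU.dotProduct_mulVec_self hAe)).add (hΦ'.dotProduct_mulVec_self hMa)).add
    (hΦ.dotProduct_mulVec_self hAa) |>.congr_deriv ?_
  have e₁ := congrArg (U' t ⬝ᵥ ·) hode₁
  have e₂ := congrArg (Φ' t ⬝ᵥ ·) hode₂
  simp only [dotProduct_add, dotProduct_sub, add_mulVec] at e₁ e₂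
  have hcoupling := dotProduct_transpose_mulVec Ce (Φ' t) (U' t)
  linarith [hM₁.dotProduct_mulVec_comm u'' (U' t), hMa.dotProduct_mulVec_comm φ'' (Φ' t)]

end ElastoAcoustic

theorem semidiscrete_stability_general
    {n m : ℕ} (T : ℝ)
    (M₁ M₂ M₃ Ae : Matrix (Fin n) (Fin n) ℝ)
    (Ma Aa : Matrix (Fin m) (Fin m) ℝ)
    (Ce : Matrix (Fin n) (Fin m) ℝ)
    (hM₃ : M₃.IsSymm) (hAe : Ae.IsSymm)
    (hAa : Aa.IsSymm)
    (hM₁pd : M₁.PosDef) (hMapd : Ma.PosDef)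
    (hM₂psd : ∀ x : Fin n → ℝ, 0 ≤ x ⬝ᵥ (M₂ *ᵥ x))
    (hM₃psd : ∀ x : Fin n → ℝ, 0 ≤ x ⬝ᵥ (M₃ *ᵥ x))
    (hAepsd : ∀ x : Fin n → ℝ, 0 ≤ x ⬝ᵥ (Ae *ᵥ x))
    (hAapsd : ∀ y : Fin m → ℝ, 0 ≤ y ⬝ᵥ (Aa *ᵥ y))
    (Fe : ℝ → Fin n → ℝ) (Fa : ℝ → Fin m → ℝ)
    (hFe : Continuous Fe) (hFa : Continuous Fa)
    (U U' U'' : ℝ → Fin n → ℝ) (Φ Φ' Φ'' : ℝ → Fin m → ℝ)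
    (hU' : ∀ t ∈ Icc (0 : ℝ) T, HasDerivAt U (U' t) t)
    (hU'' : ∀ t ∈ Icc (0 : ℝ) T, HasDerivAt U' (U'' t) t)
    (hΦ' : ∀ t ∈ Icc (0 : ℝ) T, HasDerivAt Φ (Φ' t) t)
    (hΦ'' : ∀ t ∈ Icc (0 : ℝ) T, HasDerivAt Φ' (Φ'' t) t)
    (hode₁ : ∀ t ∈ Icc (0 : ℝ) T,
      M₁ *ᵥ U'' t + M₂ *ᵥ U' t + (M₃ + Ae) *ᵥ U t + Ce *ᵥ Φ' t = Fe t)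
    (hode₂ : ∀ t ∈ Icc (0 : ℝ) T,
      Ma *ᵥ Φ'' t + Aa *ᵥ Φ t - Ceᵀ *ᵥ U' t = Fa t)
    (E : ℝ → ℝ)
    (hE : ∀ s, E s =
      U' s ⬝ᵥ (M₁ *ᵥ U' s) + U s ⬝ᵥ (M₃ *ᵥ U s) + U s ⬝ᵥ (Ae *ᵥ U s)
        + Φ' s ⬝ᵥ (Ma *ᵥ Φ' s) + Φ s ⬝ᵥ (Aa *ᵥ Φ s)) :
    ∀ t ∈ Icc (0 : ℝ) T,
      Real.sqrt (E t) ≤ Real.sqrt (E 0)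
        + ∫ τ in (0 : ℝ)..t,
            (Real.sqrt (Fe τ ⬝ᵥ (M₁⁻¹ *ᵥ Fe τ)) + Real.sqrt (Fa τ ⬝ᵥ (Ma⁻¹ *ᵥ Fa τ))) := by
  intro t ht
  have hkin₁ (s : ℝ) : U' s ⬝ᵥ (M₁ *ᵥ U' s) ≤ E s := by
    linarith [hE s, hM₃psd (U s), hAepsd (U s), hAapsd (Φ s),
      hMapd.posSemidef.dotProduct_mulVec_self_nonneg (Φ' s)]
  have hkina (s : ℝ) : Φ' s ⬝ᵥ (Ma *ᵥ Φ' s) ≤ E s := by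
    linarith [hE s, hM₃psd (U s), hAepsd (U s), hAapsd (Φ s),
      hM₁pd.posSemidef.dotProduct_mulVec_self_nonneg (U' s)]
  have hIcc : Icc 0 t ⊆ Icc 0 T := Icc_subset_Icc_right ht.2
  refine sqrt_le_sqrt_add_integral_of_deriv_le (E' := fun s ↦ 2 * (U' s ⬝ᵥ Fe s)
    + 2 * (Φ' s ⬝ᵥ Fa s) - 2 * (U' s ⬝ᵥ (M₂ *ᵥ U' s))) ht.1 (fun s hs ↦ ?_)
    (fun s _ ↦ (hM₁pd.posSemidef.dotProduct_mulVec_self_nonneg _).trans (hkin₁ s)) (by fun_prop)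
    (fun s _ ↦ by positivity) (fun s _ ↦ ?_)
  · rw [funext hE]
    exact hasDerivAt_energy (isHermitian_iff_isSymm.1 hM₁pd.isHermitian) hM₃ hAe
      (isHermitian_iff_isSymm.1 hMapd.isHermitian) hAa (hU' s (hIcc hs)) (hU'' s (hIcc hs))
      (hΦ' s (hIcc hs)) (hΦ'' s (hIcc hs)) (hode₁ s (hIcc hs)) (hode₂ s (hIcc hs))
  · linarith [hM₁pd.dotProduct_le_sqrt_mul_sqrt_inv_of_le (hkin₁ s) (Fe s),
      hMapd.dotProduct_le_sqrt_mul_sqrt_inv_of_le (hkina s) (Fa s), hM₂psd (U' s)]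

/-- Stability estimate for the semi-discrete elasto-acoustic
system: with `E(t) = U̇ᵀM₁U̇ + UᵀM₃U + UᵀA_eU + Φ̇ᵀM_aΦ̇ + ΦᵀA_aΦ`, positive
definite mass matrices `M₁`, `M_a` and positive semidefinite `M₂, M₃, A_e, A_a`,
one has `√E(t) ≤ √E(0) + ∫₀ᵗ (√(F_eᵀM₁⁻¹F_e) + √(F_aᵀM_a⁻¹F_a)) dτ`. -/
theorem semidiscrete_stability
    {n m : ℕ} (T : ℝ) (hT : 0 < T)
    (M₁ M₂ M₃ Ae : Matrix (Fin n) (Fin n) ℝ)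
    (Ma Aa : Matrix (Fin m) (Fin m) ℝ)
    (Ce : Matrix (Fin n) (Fin m) ℝ)
    (hM₁ : M₁.IsSymm) (hM₃ : M₃.IsSymm) (hAe : Ae.IsSymm)
    (hMa : Ma.IsSymm) (hAa : Aa.IsSymm)
    (hM₁pd : M₁.PosDef) (hMapd : Ma.PosDef)
    (hM₂psd : ∀ x : Fin n → ℝ, 0 ≤ x ⬝ᵥ (M₂ *ᵥ x))
    (hM₃psd : ∀ x : Fin n → ℝ, 0 ≤ x ⬝ᵥ (M₃ *ᵥ x))
    (hAepsd : ∀ x : Fin n → ℝ, 0 ≤ x ⬝ᵥ (Ae *ᵥ x))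
    (hAapsd : ∀ y : Fin m → ℝ, 0 ≤ y ⬝ᵥ (Aa *ᵥ y))
    (Fe : ℝ → Fin n → ℝ) (Fa : ℝ → Fin m → ℝ)
    (hFe : Continuous Fe) (hFa : Continuous Fa)
    (U U' U'' : ℝ → Fin n → ℝ) (Φ Φ' Φ'' : ℝ → Fin m → ℝ)
    (hU' : ∀ t ∈ Icc (0 : ℝ) T, HasDerivAt U (U' t) t)
    (hU'' : ∀ t ∈ Icc (0 : ℝ) T, HasDerivAt U' (U'' t) t)
    (hΦ' : ∀ t ∈ Icc (0 : ℝ) T, HasDerivAt Φ (Φ' t) t)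
    (hΦ'' : ∀ t ∈ Icc (0 : ℝ) T, HasDerivAt Φ' (Φ'' t) t)
    (hode₁ : ∀ t ∈ Icc (0 : ℝ) T,
      M₁ *ᵥ U'' t + M₂ *ᵥ U' t + (M₃ + Ae) *ᵥ U t + Ce *ᵥ Φ' t = Fe t)
    (hode₂ : ∀ t ∈ Icc (0 : ℝ) T,
      Ma *ᵥ Φ'' t + Aa *ᵥ Φ t - Ceᵀ *ᵥ U' t = Fa t)
    (E : ℝ → ℝ)
    (hE : ∀ s, E s =
      U' s ⬝ᵥ (M₁ *ᵥ U' s) + U s ⬝ᵥ (M₃ *ᵥ U s) + U s ⬝ᵥ (Ae *ᵥ U s)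
        + Φ' s ⬝ᵥ (Ma *ᵥ Φ' s) + Φ s ⬝ᵥ (Aa *ᵥ Φ s)) :
    ∀ t ∈ Icc (0 : ℝ) T,
      Real.sqrt (E t) ≤ Real.sqrt (E 0)
        + ∫ τ in (0 : ℝ)..t,
            (Real.sqrt (Fe τ ⬝ᵥ (M₁⁻¹ *ᵥ Fe τ)) + Real.sqrt (Fa τ ⬝ᵥ (Ma⁻¹ *ᵥ Fa τ))) :=
  semidiscrete_stability_general T M₁ M₂ M₃ Ae Ma Aa Ce hM₃ hAe hAa hM₁pd hMapd hM₂psd hM₃psd hAepsd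
    hAapsd Fe Fa hFe hFa U U' U'' Φ Φ' Φ'' hU' hU'' hΦ' hΦ'' hode₁ hode₂ E hE
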